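/- arXiv:1105.4214 — 2 statements merged into one kernel-verified Lean document; each statement's English description precedes it below -/
import Mathlib

section
/- Let α ∈ (0,2]. For every natural number n, all real numbers u₁, …, u_n, and all real coefficients c₁, …, c_n, one has Σ_{i=1}^{n} Σ_{j=1}^{n} c_i c_j (|u_i + u_j|^α − |u_i − u_j|^α) ≥ 0. That is, the kernel K(u,v) = |u+v|^α − |u−v|^α on ℝ × ℝ is positive semidefinite. -/
/-!
For `0 < α < 2` the substitution `s = |x| t` gives `∫₀^∞ (1 - cos(xt)) t^(-1-α) dt = |x|^α I_α`
with `0 < I_α < ∞`. Since `(1 - cos((a+b)t)) - (1 - cos((a-b)t)) = 2 sin(at) sin(bt)`, the kernel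
times `I_α` is `∫₀^∞ sin(at) sin(bt) · 2t^(-1-α) dt`, so the quadratic form times `I_α` is
`∫₀^∞ (Σ cᵢ sin(uᵢt))² · 2t^(-1-α) dt ≥ 0`. For `α = 2` the kernel is `4uv`, of rank one.
-/

open MeasureTheory Real Set

theorem sum_sum_mul_integral_mul_mul_nonneg {ι X : Type*} [Fintype ι] [MeasurableSpace X]
    (μ : Measure X) (w : X → ℝ) (hw : ∀ᵐ x ∂μ, 0 ≤ w x) (g : ι → X → ℝ)
    (hg : ∀ i j, Integrable (fun x => g i x * g j x * w x) μ) (c : ι → ℝ) :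
    0 ≤ ∑ i, ∑ j, c i * c j * ∫ x, g i x * g j x * w x ∂μ := by
  calc 0 ≤ ∫ x, (∑ i, c i * g i x) ^ 2 * w x ∂μ :=
        integral_nonneg_of_ae (hw.mono fun x hx => mul_nonneg (sq_nonneg _) hx)
    _ = ∫ x, ∑ i, ∑ j, c i * c j * (g i x * g j x * w x) ∂μ := by
        congr 1 with x
        rw [sq, Finset.sum_mul_sum]
        simp only [Finset.sum_mul]
        exact Finset.sum_congr rfl fun i _ => Finset.sum_congr rfl fun j _ => by ring
    _ = ∑ i, ∑ j, c i * c j * ∫ x, g i x * g j x * w x ∂μ := by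
        rw [integral_finsetSum _ fun i _ => integrable_finsetSum _ fun j _ => (hg i j).const_mul _]
        simp only [← integral_const_mul]
        exact Finset.sum_congr rfl fun i _ => integral_finsetSum _ fun j _ => (hg i j).const_mul _

theorem continuousOn_one_sub_cos_mul_mul_rpow (α a : ℝ) :
    ContinuousOn (fun t => (1 - cos (a * t)) * t ^ (-1 - α)) (Ioi 0) :=
  (by fun_prop : Continuous fun t => 1 - cos (a * t)).continuousOn.mul
    (continuousOn_id.rpow_const fun t ht => Or.inl (ne_of_gt ht))

theorem integrableOn_Ioc_one_sub_cos_mul_mul_rpow {α : ℝ} (hα : α < 2) (a : ℝ) :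
    IntegrableOn (fun t => (1 - cos (a * t)) * t ^ (-1 - α)) (Ioc 0 1) := by
  have hbound : IntegrableOn (fun t : ℝ => a ^ 2 / 2 * t ^ (1 - α)) (Ioc 0 1) :=
    ((intervalIntegrable_iff_integrableOn_Ioc_of_le zero_le_one).mp
      (intervalIntegral.intervalIntegrable_rpow' (by linarith))).const_mul _
  refine hbound.mono' (((continuousOn_one_sub_cos_mul_mul_rpow α a).mono
    Ioc_subset_Ioi_self).aestronglyMeasurable measurableSet_Ioc) ?_
  filter_upwards [ae_restrict_mem measurableSet_Ioc] with t ht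
  have ht0 : 0 < t := ht.1
  have hcos : 1 - cos (a * t) ≤ (a * t) ^ 2 / 2 := by
    linarith [one_sub_sq_div_two_le_cos (x := a * t)]
  rw [Real.norm_of_nonneg (mul_nonneg (by linarith [cos_le_one (a * t)]) (by positivity))]
  calc (1 - cos (a * t)) * t ^ (-1 - α)
      ≤ (a * t) ^ 2 / 2 * t ^ (-1 - α) := by gcongr
    _ = a ^ 2 / 2 * (t ^ (2 : ℝ) * t ^ (-1 - α)) := by rw [rpow_two]; ring
    _ = a ^ 2 / 2 * t ^ (1 - α) := by rw [← rpow_add ht0]; ring_nf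

theorem integrableOn_Ioi_one_sub_cos_mul_mul_rpow {α : ℝ} (hα : 0 < α) (a : ℝ) :
    IntegrableOn (fun t => (1 - cos (a * t)) * t ^ (-1 - α)) (Ioi 1) := by
  have hbound : IntegrableOn (fun t : ℝ => 2 * t ^ (-1 - α)) (Ioi 1) :=
    (integrableOn_Ioi_rpow_of_lt (by linarith) one_pos).const_mul 2
  refine hbound.mono' (((continuousOn_one_sub_cos_mul_mul_rpow α a).mono
    (Ioi_subset_Ioi zero_le_one)).aestronglyMeasurable measurableSet_Ioi) ?_
  filter_upwards [ae_restrict_mem measurableSet_Ioi] with t ht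
  have ht0 : 0 < t := one_pos.trans ht
  rw [Real.norm_of_nonneg (mul_nonneg (by linarith [cos_le_one (a * t)]) (by positivity))]
  gcongr
  linarith [neg_one_le_cos (a * t)]

theorem integrableOn_one_sub_cos_mul_mul_rpow {α : ℝ} (hα0 : 0 < α) (hα2 : α < 2) (a : ℝ) :
    IntegrableOn (fun t => (1 - cos (a * t)) * t ^ (-1 - α)) (Ioi 0) := by
  rw [← Ioc_union_Ioi_eq_Ioi zero_le_one]
  exact (integrableOn_Ioc_one_sub_cos_mul_mul_rpow hα2 a).union
    (integrableOn_Ioi_one_sub_cos_mul_mul_rpow hα0 a)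

theorem setIntegral_one_sub_cos_mul_mul_rpow {α : ℝ} (hα : α ≠ 0) (a : ℝ) :
    ∫ t in Ioi 0, (1 - cos (a * t)) * t ^ (-1 - α) =
      |a| ^ α * ∫ t in Ioi 0, (1 - cos t) * t ^ (-1 - α) := by
  rcases eq_or_ne a 0 with rfl | ha
  · simp [zero_rpow hα]
  have hb : 0 < |a| := abs_pos.2 ha
  have hcos (t : ℝ) : cos (a * t) = cos (|a| * t) := by
    rcases abs_choice a with h | h <;> simp [h]
  have hscale : ∀ t ∈ Ioi (0 : ℝ), (1 - cos (a * t)) * t ^ (-1 - α) =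
      |a| ^ (1 + α) * ((1 - cos (|a| * t)) * (|a| * t) ^ (-1 - α)) := by
    intro t ht
    have hpow : |a| ^ (1 + α) * |a| ^ (-1 - α) = 1 := by rw [← rpow_add hb]; norm_num
    rw [mul_rpow hb.le (le_of_lt ht), hcos]
    linear_combination ((1 - cos (|a| * t)) * t ^ (-1 - α)) * hpow.symm
  rw [setIntegral_congr_fun measurableSet_Ioi hscale, integral_const_mul,
    integral_comp_mul_left_Ioi (fun s => (1 - cos s) * s ^ (-1 - α)) 0 hb, mul_zero,
    smul_eq_mul, ← mul_assoc, ← rpow_neg_one, ← rpow_add hb]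
  norm_num

theorem setIntegral_one_sub_cos_mul_rpow_pos {α : ℝ} (hα0 : 0 < α) (hα2 : α < 2) :
    0 < ∫ t in Ioi 0, (1 - cos t) * t ^ (-1 - α) := by
  have hint := integrableOn_one_sub_cos_mul_mul_rpow hα0 hα2 1
  simp only [one_mul] at hint
  rw [setIntegral_pos_iff_support_of_nonneg_ae ?nonneg hint]
  case nonneg =>
    filter_upwards [ae_restrict_mem measurableSet_Ioi] with t ht
    exact mul_nonneg (by linarith [cos_le_one t]) (rpow_nonneg (le_of_lt ht) _)
  -- the integrand is positive on `(0, π)`, which contains `(1, 2)`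
  refine lt_of_lt_of_le ?_ (measure_mono (?_ : Ioo (1 : ℝ) 2 ⊆ _))
  · rw [volume_Ioo]; norm_num
  · rintro t ⟨ht1, ht2⟩
    have ht0 : 0 < t := one_pos.trans ht1
    have hcos : cos t < 1 := by
      simpa using cos_lt_cos_of_nonneg_of_le_pi le_rfl (ht2.le.trans two_le_pi) ht0
    exact ⟨ne_of_gt (mul_pos (by linarith) (rpow_pos_of_pos ht0 _)), ht0⟩

theorem sin_mul_mul_sin_mul_mul_two_mul (a b t s : ℝ) :
    sin (a * t) * sin (b * t) * (2 * s) =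
      (1 - cos ((a + b) * t)) * s - (1 - cos ((a - b) * t)) * s := by
  rw [add_mul a, sub_mul a, cos_add, cos_sub]; ring

theorem integrableOn_sin_mul_mul_sin_mul_mul_rpow {α : ℝ} (hα0 : 0 < α) (hα2 : α < 2)
    (a b : ℝ) :
    IntegrableOn (fun t => sin (a * t) * sin (b * t) * (2 * t ^ (-1 - α))) (Ioi 0) := by
  simp only [sin_mul_mul_sin_mul_mul_two_mul]
  exact (integrableOn_one_sub_cos_mul_mul_rpow hα0 hα2 _).sub
    (integrableOn_one_sub_cos_mul_mul_rpow hα0 hα2 _)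

theorem abs_add_rpow_sub_abs_sub_rpow_mul_setIntegral {α : ℝ} (hα0 : 0 < α) (hα2 : α < 2)
    (a b : ℝ) :
    (|a + b| ^ α - |a - b| ^ α) * ∫ t in Ioi 0, (1 - cos t) * t ^ (-1 - α) =
      ∫ t in Ioi 0, sin (a * t) * sin (b * t) * (2 * t ^ (-1 - α)) := by
  simp only [sin_mul_mul_sin_mul_mul_two_mul]
  rw [integral_sub (integrableOn_one_sub_cos_mul_mul_rpow hα0 hα2 _)
      (integrableOn_one_sub_cos_mul_mul_rpow hα0 hα2 _),
    setIntegral_one_sub_cos_mul_mul_rpow hα0.ne', setIntegral_one_sub_cos_mul_mul_rpow hα0.ne',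
    sub_mul]

theorem sum_sum_mul_abs_add_sq_sub_abs_sub_sq_nonneg {ι : Type*} [Fintype ι] (u c : ι → ℝ) :
    0 ≤ ∑ i, ∑ j, c i * c j * (|u i + u j| ^ (2 : ℝ) - |u i - u j| ^ (2 : ℝ)) := by
  have hsum : ∑ i, ∑ j, c i * c j * (|u i + u j| ^ (2 : ℝ) - |u i - u j| ^ (2 : ℝ)) =
      4 * (∑ i, c i * u i) ^ 2 := by
    simp only [rpow_two, sq_abs]
    rw [sq, Finset.sum_mul_sum]
    simp only [Finset.mul_sum]
    exact Finset.sum_congr rfl fun i _ => Finset.sum_congr rfl fun j _ => by ring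
  rw [hsum]
  positivity

/-- For `α ∈ (0,2]`, the kernel `K(u,v) = |u+v|^α − |u−v|^α` on `ℝ × ℝ`
is positive semidefinite: for all points `u₁,…,u_n` and weights `c₁,…,c_n`,
`Σᵢ Σⱼ cᵢ cⱼ (|uᵢ+uⱼ|^α − |uᵢ−uⱼ|^α) ≥ 0`. -/
theorem kernel_abs_add_rpow_sub_abs_sub_rpow_posSemidef
    (α : ℝ) (hα0 : 0 < α) (hα2 : α ≤ 2)
    (n : ℕ) (u : Fin n → ℝ) (c : Fin n → ℝ) :
    0 ≤ ∑ i : Fin n, ∑ j : Fin n,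
      c i * c j * (|u i + u j| ^ α - |u i - u j| ^ α) := by
  obtain hα2 | rfl := hα2.lt_or_eq
  · refine nonneg_of_mul_nonneg_left ?_ (setIntegral_one_sub_cos_mul_rpow_pos hα0 hα2)
    simp only [Finset.sum_mul, mul_assoc (c _ * c _),
      abs_add_rpow_sub_abs_sub_rpow_mul_setIntegral hα0 hα2]
    refine sum_sum_mul_integral_mul_mul_nonneg _ _ ?_ (fun i t => sin (u i * t))
      (fun i j => integrableOn_sin_mul_mul_sin_mul_mul_rpow hα0 hα2 (u i) (u j)) c
    filter_upwards [ae_restrict_mem measurableSet_Ioi] with t ht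
    exact mul_nonneg zero_le_two (rpow_nonneg (le_of_lt ht) _)
  · exact sum_sum_mul_abs_add_sq_sub_abs_sub_sq_nonneg u c
end

section
/- Let X and Y be independent, identically distributed real-valued random variables and let t > 0. Then E[e^{−t(X−Y)²}] ≥ E[e^{−t(X+Y)²}]. -/
/-!
Since `e^{-tz²}` is the characteristic function of the centred Gaussian of variance `2t`, it is
an average of `z ↦ cos (ξ z)`, so it suffices to compare `E cos (ξ(X+Y))` with `E cos (ξ(X-Y))`.
Their difference is `2 E[sin (ξX) sin (ξY)] = 2 (E sin (ξX))² ≥ 0` by independence.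
-/

open MeasureTheory ProbabilityTheory

lemma ProbabilityTheory.IdentDistrib.integral_comp_mul_comp_eq_sq {Ω 𝓧 : Type*}
    [MeasurableSpace Ω] [MeasurableSpace 𝓧] {μ : Measure Ω} {X Y : Ω → 𝓧}
    (hid : IdentDistrib X Y μ μ) (hindep : IndepFun X Y μ) {g : 𝓧 → ℝ} (hg : Measurable g) :
    ∫ ω, g (X ω) * g (Y ω) ∂μ = (∫ ω, g (X ω) ∂μ) ^ 2 := by
  rw [hindep.integral_fun_comp_mul_comp hid.aemeasurable_fst hid.aemeasurable_snd
    hg.aestronglyMeasurable hg.aestronglyMeasurable, sq]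
  exact congrArg _ (hid.comp hg).integral_eq.symm

lemma re_charFun_eq_integral_cos (ν : Measure ℝ) [IsFiniteMeasure ν] (z : ℝ) :
    (charFun ν z).re = ∫ ξ, Real.cos (ξ * z) ∂ν := by
  rw [charFun_apply_real, ← RCLike.re_eq_complex_re, ← integral_re]
  · congr 1 with ξ
    rw [← Complex.ofReal_mul, RCLike.re_eq_complex_re, Complex.exp_ofReal_mul_I_re, mul_comm]
  · exact (integrable_const (1 : ℝ)).mono (by fun_prop) (ae_of_all _ fun ξ => by
      rw [← Complex.ofReal_mul, Complex.norm_exp_ofReal_mul_I, norm_one])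

lemma re_charFun_gaussianReal_zero (v : NNReal) (z : ℝ) :
    (charFun (gaussianReal 0 v) z).re = Real.exp (-(v / 2) * z ^ 2) := by
  rw [charFun_gaussianReal, ← Complex.exp_ofReal_re]
  congr 2
  push_cast
  ring

section
variable {Ω : Type*} [MeasurableSpace Ω] {μ : Measure Ω} [IsFiniteMeasure μ]

lemma integrable_comp_mul_comp_of_abs_le_one {X Y : Ω → ℝ} {f g : ℝ → ℝ}
    (hf : Measurable f) (hg : Measurable g) (hf1 : ∀ x, |f x| ≤ 1) (hg1 : ∀ x, |g x| ≤ 1)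
    (hX : AEMeasurable X μ) (hY : AEMeasurable Y μ) :
    Integrable (fun ω => f (X ω) * g (Y ω)) μ :=
  Integrable.of_bound (by fun_prop) 1 (ae_of_all _ fun ω => by
    rw [Real.norm_eq_abs, abs_mul]
    exact mul_le_one₀ (hf1 _) (abs_nonneg _) (hg1 _))

lemma integrable_uncurry_cos_mul {ν : Measure ℝ} [IsFiniteMeasure ν] {Z : Ω → ℝ}
    (hZ : AEMeasurable Z μ) :
    Integrable (Function.uncurry fun ω ξ => Real.cos (ξ * Z ω)) (μ.prod ν) :=
  Integrable.of_bound (by have := hZ.comp_fst (ν := ν); fun_prop) 1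
    (ae_of_all _ fun _ => Real.abs_cos_le_one _)

variable {X Y : Ω → ℝ}

lemma integral_cos_mul_add_le_integral_cos_mul_sub (hid : IdentDistrib X Y μ μ)
    (hindep : IndepFun X Y μ) (ξ : ℝ) :
    ∫ ω, Real.cos (ξ * (X ω + Y ω)) ∂μ ≤ ∫ ω, Real.cos (ξ * (X ω - Y ω)) ∂μ := by
  have hX := hid.aemeasurable_fst.const_mul ξ
  have hY := hid.aemeasurable_snd.const_mul ξ
  have hcc := integrable_comp_mul_comp_of_abs_le_one Real.measurable_cos Real.measurable_cos
    Real.abs_cos_le_one Real.abs_cos_le_one hX hY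
  have hss := integrable_comp_mul_comp_of_abs_le_one Real.measurable_sin Real.measurable_sin
    Real.abs_sin_le_one Real.abs_sin_le_one hX hY
  have hsin : 0 ≤ ∫ ω, Real.sin (ξ * X ω) * Real.sin (ξ * Y ω) ∂μ := by
    rw [hid.integral_comp_mul_comp_eq_sq hindep (g := fun x => Real.sin (ξ * x)) (by fun_prop)]
    positivity
  simp only [mul_add, mul_sub, Real.cos_add, Real.cos_sub]
  rw [integral_sub hcc hss, integral_add hcc hss]
  linarith

lemma integral_re_charFun_add_le_integral_re_charFun_sub (hid : IdentDistrib X Y μ μ)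
    (hindep : IndepFun X Y μ) (ν : Measure ℝ) [IsFiniteMeasure ν] :
    ∫ ω, (charFun ν (X ω + Y ω)).re ∂μ ≤ ∫ ω, (charFun ν (X ω - Y ω)).re ∂μ := by
  have hadd := integrable_uncurry_cos_mul (ν := ν) (Z := fun ω => X ω + Y ω)
    (hid.aemeasurable_fst.add hid.aemeasurable_snd)
  have hsub := integrable_uncurry_cos_mul (ν := ν) (Z := fun ω => X ω - Y ω)
    (hid.aemeasurable_fst.sub hid.aemeasurable_snd)
  simp only [re_charFun_eq_integral_cos]
  rw [integral_integral_swap hadd, integral_integral_swap hsub]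
  exact integral_mono hadd.integral_prod_right hsub.integral_prod_right
    (integral_cos_mul_add_le_integral_cos_mul_sub hid hindep)

end

theorem expectation_exp_neg_sq_add_le_expectation_exp_neg_sq_sub_general
    {Ω : Type*} [MeasurableSpace Ω] (μ : Measure Ω) [IsProbabilityMeasure μ]
    (X Y : Ω → ℝ)
    (hindep : IndepFun X Y μ) (hid : IdentDistrib X Y μ μ)
    (t : ℝ) (ht : 0 < t) :
    (∫ ω, Real.exp (-t * (X ω + Y ω) ^ 2) ∂μ)
      ≤ ∫ ω, Real.exp (-t * (X ω - Y ω) ^ 2) ∂μ := by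
  have hgauss (z : ℝ) :
      Real.exp (-t * z ^ 2) = (charFun (gaussianReal 0 (2 * t).toNNReal) z).re := by
    rw [re_charFun_gaussianReal_zero, Real.coe_toNNReal _ (by positivity)]
    ring_nf
  simp only [hgauss]
  exact integral_re_charFun_add_le_integral_re_charFun_sub hid hindep _

/-- For i.i.d. real random variables `X, Y` and `t > 0`,
`E e^{−t(X−Y)²} ≥ E e^{−t(X+Y)²}`. -/
theorem expectation_exp_neg_sq_add_le_expectation_exp_neg_sq_sub
    {Ω : Type*} [MeasurableSpace Ω] (μ : Measure Ω) [IsProbabilityMeasure μ]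
    (X Y : Ω → ℝ) (hX : Measurable X) (hY : Measurable Y)
    (hindep : IndepFun X Y μ) (hid : IdentDistrib X Y μ μ)
    (t : ℝ) (ht : 0 < t) :
    (∫ ω, Real.exp (-t * (X ω + Y ω) ^ 2) ∂μ)
      ≤ ∫ ω, Real.exp (-t * (X ω - Y ω) ^ 2) ∂μ :=
  expectation_exp_neg_sq_add_le_expectation_exp_neg_sq_sub_general μ X Y hindep hid t ht
end
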